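/- arXiv:2105.02217 — 4 statements merged into one kernel-verified Lean document; each statement's English description precedes it below -/
import Mathlib

section
/- Let k ∈ {1,…,n} and let x : ℝ → ℝ. If x(s) tends to a limit L as s → tᵏ from the right, then the difference quotient (x(s) − x(tᵏ))/(g_s(s) − g_s(tᵏ)) tends to (L − x(tᵏ))·2ᵏ as s → tᵏ from the right. (That is, at a jump point of g_s the Stieltjes g_s-derivative of x equals the jump of x divided by the jump of g_s.) -/
/-!
Immediately to the right of `tᵏ` the only summand of `g` that has switched on since `tᵏ` is `2⁻ᵏ`
(the points `tʲ` are distinct), so there `g s - g tᵏ = (s - tᵏ) + 2⁻ᵏ → 2⁻ᵏ ≠ 0`, and the quotient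
tends to `(L - x tᵏ) / 2⁻ᵏ`.
-/

open Filter Set

open Topology

section RightJumps

variable {α ι M : Type*} [LinearOrder α] [TopologicalSpace α] [OrderTopology α]

theorem eventually_lt_iff_le_nhdsGT (a t : α) : ∀ᶠ s in 𝓝[>] t, (a < s ↔ a ≤ t) := by
  rcases le_or_gt a t with hat | hta
  · filter_upwards [self_mem_nhdsWithin] with s hs
    exact iff_of_true (hat.trans_lt hs) hat
  · filter_upwards [Ioo_mem_nhdsGT hta] with s hs
    exact iff_of_false hs.2.not_gt hta.not_ge

theorem eventually_sum_ite_lt_nhdsGT [DecidableEq ι] [AddCommMonoid M] (p : ι → α) (c : ι → M)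
    {S : Finset ι} {k : ι} (hk : k ∈ S) (hp : InjOn p S) :
    ∀ᶠ s in 𝓝[>] p k, ∑ j ∈ S, (if p j < s then c j else 0) =
      ∑ j ∈ S, (if p j < p k then c j else 0) + c k := by
  filter_upwards [(eventually_all_finset S).2 fun j _ => eventually_lt_iff_le_nhdsGT (p j) (p k)]
    with s hs
  have hsplit : ∀ j ∈ S, (if p j < s then c j else 0) =
      (if p j < p k then c j else 0) + (if k = j then c j else 0) := by
    intro j hj
    rw [if_congr (hs j hj) rfl rfl]
    by_cases hkj : k = j
    · subst hkj
      simp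
    · have hne : p j ≠ p k := fun h => hkj (hp hj hk h).symm
      simp [hkj, hne.le_iff_lt]
  rw [Finset.sum_congr rfl hsplit, Finset.sum_add_distrib, Finset.sum_ite_eq, if_pos hk]

end RightJumps

theorem stieltjes_derivative_at_jump_point_general
    (n : ℕ) (tk : ℕ → ℝ)
    (htmono : ∀ k < n, tk k < tk (k + 1))
    (g : ℝ → ℝ)
    (hg : ∀ s : ℝ, g s = s + ∑ k ∈ Finset.Icc 1 n,
      (if tk k < s then ((2 : ℝ) ^ k)⁻¹ else 0))
    (k : ℕ) (hk1 : 1 ≤ k) (hkn : k ≤ n)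
    (x : ℝ → ℝ) (L : ℝ)
    (hx : Tendsto x (nhdsWithin (tk k) (Set.Ioi (tk k))) (nhds L)) :
    Tendsto (fun s => (x s - x (tk k)) / (g s - g (tk k)))
      (nhdsWithin (tk k) (Set.Ioi (tk k)))
      (nhds ((L - x (tk k)) * 2 ^ k)) := by
  have hinj : InjOn tk (Finset.Icc 1 n) := by
    rw [Finset.coe_Icc]
    exact (strictMonoOn_Iic_of_lt_succ htmono).injOn.mono Icc_subset_Iic_self
  have hjump : ∀ᶠ s in 𝓝[>] tk k, g s - g (tk k) = (s - tk k) + ((2 : ℝ) ^ k)⁻¹ := by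
    filter_upwards [eventually_sum_ite_lt_nhdsGT tk (fun j => ((2 : ℝ) ^ j)⁻¹)
      (Finset.mem_Icc.2 ⟨hk1, hkn⟩) hinj] with s hs
    rw [hg, hg, hs]
    ring
  have hden : Tendsto (fun s => g s - g (tk k)) (𝓝[>] tk k) (𝓝 ((2 : ℝ) ^ k)⁻¹) := by
    refine (tendsto_nhdsWithin_of_tendsto_nhds ?_).congr' (hjump.mono fun _ h => h.symm)
    exact (by fun_prop : Continuous fun s : ℝ => s - tk k + ((2 : ℝ) ^ k)⁻¹).tendsto' _ _ (by simp)
  rw [← div_inv_eq_mul]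
  exact (hx.sub_const (x (tk k))).div hden (by positivity)

/-- At a jump point `tᵏ` (`k ∈ {1,…,n}`) of the derivator `g_s`, if
`x(s) → L` as `s → tᵏ⁺`, then the Stieltjes difference quotient
`(x(s) − x(tᵏ))/(g_s(s) − g_s(tᵏ))` tends to `(L − x(tᵏ))·2ᵏ` as `s → tᵏ⁺`:
the Stieltjes derivative equals the jump of `x` divided by the jump of `g_s`. -/
theorem stieltjes_derivative_at_jump_point
    (T : ℝ) (hT : 0 < T) (n : ℕ) (tk : ℕ → ℝ)
    (ht0 : tk 0 = 0) (htmono : ∀ k < n, tk k < tk (k + 1)) (htn : tk n < T)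
    (g : ℝ → ℝ)
    (hg : ∀ s : ℝ, g s = s + ∑ k ∈ Finset.Icc 1 n,
      (if tk k < s then ((2 : ℝ) ^ k)⁻¹ else 0))
    (k : ℕ) (hk1 : 1 ≤ k) (hkn : k ≤ n)
    (x : ℝ → ℝ) (L : ℝ)
    (hx : Tendsto x (nhdsWithin (tk k) (Set.Ioi (tk k))) (nhds L)) :
    Tendsto (fun s => (x s - x (tk k)) / (g s - g (tk k)))
      (nhdsWithin (tk k) (Set.Ioi (tk k)))
      (nhds ((L - x (tk k)) * 2 ^ k)) :=
  stieltjes_derivative_at_jump_point_general n tk htmono g hg k hk1 hkn x L hx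
end

section
/- (Uniqueness for the SIR system) Let β, γ ∈ ℝ, let t₀ < t₁ be real numbers, and let x, y : ℝ → ℝ³ be continuous on [t₀, t₁] and such that, at every t ∈ [t₀, t₁], x (resp. y) has derivative f_{β,γ}(x(t)) (resp. f_{β,γ}(y(t))) within [t₀, t₁]. If x(t₀) = y(t₀), then x(t) = y(t) for every t ∈ [t₀, t₁]. -/
/-!
Solutions of an autonomous ODE with a locally Lipschitz vector field are unique: on the compact
set swept out by two solutions over `[t₀, t₁]` the field is Lipschitz, and Grönwall's inequality
applies. The SIR field has polynomial coordinates, so it is smooth and hence locally Lipschitz.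
-/

open Set

theorem ODE_solution_unique_of_locallyLipschitz {E : Type*} [NormedAddCommGroup E]
    [NormedSpace ℝ E] {v : E → E} (hv : LocallyLipschitz v) {a b : ℝ} {x y : ℝ → E}
    (hxc : ContinuousOn x (Icc a b)) (hyc : ContinuousOn y (Icc a b))
    (hx : ∀ t ∈ Icc a b, HasDerivWithinAt x (v (x t)) (Icc a b) t)
    (hy : ∀ t ∈ Icc a b, HasDerivWithinAt y (v (y t)) (Icc a b) t)
    (h0 : x a = y a) : EqOn x y (Icc a b) := by
  set K := x '' Icc a b ∪ y '' Icc a b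
  have hK : IsCompact K :=
    (isCompact_Icc.image_of_continuousOn hxc).union (isCompact_Icc.image_of_continuousOn hyc)
  obtain ⟨L, hL⟩ := hv.locallyLipschitzOn.exists_lipschitzOnWith_of_compact hK
  have hIci {z : ℝ → E} (hz : ∀ t ∈ Icc a b, HasDerivWithinAt z (v (z t)) (Icc a b) t)
      (t : ℝ) (ht : t ∈ Ico a b) : HasDerivWithinAt z (v (z t)) (Ici t) t :=
    (hz t (Ico_subset_Icc_self ht)).mono_of_mem_nhdsWithin (Icc_mem_nhdsGE_of_mem ht)
  exact ODE_solution_unique_of_mem_Icc_right (s := fun _ ↦ K) (fun _ _ ↦ hL)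
    hxc (hIci hx) (fun t ht ↦ .inl (mem_image_of_mem x (Ico_subset_Icc_self ht)))
    hyc (hIci hy) (fun t ht ↦ .inr (mem_image_of_mem y (Ico_subset_Icc_self ht))) h0

theorem contDiff_of_apply_eq_sir {n : WithTop ℕ∞} {β γ : ℝ}
    {f : EuclideanSpace ℝ (Fin 3) → EuclideanSpace ℝ (Fin 3)}
    (hf : ∀ x : EuclideanSpace ℝ (Fin 3),
      f x 0 = -β * x 0 * x 1 ∧ f x 1 = β * x 0 * x 1 - γ * x 1 ∧ f x 2 = γ * x 1) :
    ContDiff ℝ n f := by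
  refine contDiff_euclidean.2 fun i ↦ ?_
  fin_cases i
  · exact (funext fun z ↦ (hf z).1 : (fun z ↦ f z 0) = _) ▸ by fun_prop
  · exact (funext fun z ↦ (hf z).2.1 : (fun z ↦ f z 1) = _) ▸ by fun_prop
  · exact (funext fun z ↦ (hf z).2.2 : (fun z ↦ f z 2) = _) ▸ by fun_prop

theorem sir_uniqueness_general
    (f : ℝ → ℝ → EuclideanSpace ℝ (Fin 3) → EuclideanSpace ℝ (Fin 3))
    (hf : ∀ (β γ : ℝ) (x : EuclideanSpace ℝ (Fin 3)),
      f β γ x 0 = -β * x 0 * x 1 ∧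
      f β γ x 1 = β * x 0 * x 1 - γ * x 1 ∧
      f β γ x 2 = γ * x 1)
    (β γ t₀ t₁ : ℝ)
    (x y : ℝ → EuclideanSpace ℝ (Fin 3))
    (hxc : ContinuousOn x (Set.Icc t₀ t₁))
    (hyc : ContinuousOn y (Set.Icc t₀ t₁))
    (hx : ∀ t ∈ Set.Icc t₀ t₁,
      HasDerivWithinAt x (f β γ (x t)) (Set.Icc t₀ t₁) t)
    (hy : ∀ t ∈ Set.Icc t₀ t₁,
      HasDerivWithinAt y (f β γ (y t)) (Set.Icc t₀ t₁) t)
    (h0 : x t₀ = y t₀) :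
    ∀ t ∈ Set.Icc t₀ t₁, x t = y t :=
  ODE_solution_unique_of_locallyLipschitz
    (contDiff_of_apply_eq_sir (n := 1) (hf β γ)).locallyLipschitz hxc hyc hx hy h0

/-- Uniqueness for the SIR system: two solutions of
`x' = f_{β,γ}(x)` on `[t₀, t₁]` with the same initial value at `t₀` coincide on
the whole interval `[t₀, t₁]`. -/
theorem sir_uniqueness
    (f : ℝ → ℝ → EuclideanSpace ℝ (Fin 3) → EuclideanSpace ℝ (Fin 3))
    (hf : ∀ (β γ : ℝ) (x : EuclideanSpace ℝ (Fin 3)),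
      f β γ x 0 = -β * x 0 * x 1 ∧
      f β γ x 1 = β * x 0 * x 1 - γ * x 1 ∧
      f β γ x 2 = γ * x 1)
    (β γ t₀ t₁ : ℝ) (h01 : t₀ < t₁)
    (x y : ℝ → EuclideanSpace ℝ (Fin 3))
    (hxc : ContinuousOn x (Set.Icc t₀ t₁))
    (hyc : ContinuousOn y (Set.Icc t₀ t₁))
    (hx : ∀ t ∈ Set.Icc t₀ t₁,
      HasDerivWithinAt x (f β γ (x t)) (Set.Icc t₀ t₁) t)
    (hy : ∀ t ∈ Set.Icc t₀ t₁,
      HasDerivWithinAt y (f β γ (y t)) (Set.Icc t₀ t₁) t)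
    (h0 : x t₀ = y t₀) :
    ∀ t ∈ Set.Icc t₀ t₁, x t = y t :=
  sir_uniqueness_general f hf β γ t₀ t₁ x y hxc hyc hx hy h0
end

section
/- (Impulsive formulation implies Stieltjes formulation) Let x : ℝ → ℝ³ satisfy: (i) x(0) = x⁰; (ii) for Lebesgue-almost every t ∈ [0,T] \ {t¹,…,tⁿ}, x is differentiable at t with x'(t) = f_{β_s(t),γ_s(t)}(x(t)); (iii) for each k ∈ {1,…,n}, lim_{s→tᵏ⁺} x(s) = xᵏ. Then: (a) for Lebesgue-almost every t ∈ [0,T] \ {t¹,…,tⁿ}, the quotient (g_s(s) − g_s(t))⁻¹ · (x(s) − x(t)) tends to f_{β_s(t),γ_s(t)}(x(t)) in ℝ³ as s → t with s ≠ t; and (b) for each k ∈ {1,…,n}, the quotient (g_s(s) − g_s(tᵏ))⁻¹ · (x(s) − x(tᵏ)) tends to 2ᵏ · (xᵏ − x(tᵏ)) as s → tᵏ from the right. That is, the Stieltjes g_s-derivative equation x'_{g_s}(t) = F_s(t, x(t)) holds μ-almost everywhere on [0,T]. -/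
open Filter Set MeasureTheory

/-- (Impulsive formulation implies Stieltjes formulation.)  If `x`
starts at `x⁰`, satisfies the SIR equation with the piecewise-constant
coefficients `β_s, γ_s` at Lebesgue-almost every `t ∈ [0,T] \ {t¹,…,tⁿ}`, and has
right-hand limit `xᵏ` at each impulse time `tᵏ`, then the Stieltjes `g_s`-derivative
equation `x'_{g_s}(t) = F_s(t, x(t))` holds μ-almost everywhere on `[0,T]`:
(a) for Lebesgue-a.e. `t ∈ [0,T] \ {t¹,…,tⁿ}` the Stieltjes difference quotient
tends to `f_{β_s(t),γ_s(t)}(x(t))`, and (b) at each `tᵏ` the right-sided Stieltjes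
difference quotient tends to `2ᵏ · (xᵏ − x(tᵏ))`. -/
theorem impulsive_implies_stieltjes
    (f : ℝ → ℝ → EuclideanSpace ℝ (Fin 3) → EuclideanSpace ℝ (Fin 3))
    (hf : ∀ (β γ : ℝ) (x : EuclideanSpace ℝ (Fin 3)),
      f β γ x 0 = -β * x 0 * x 1 ∧
      f β γ x 1 = β * x 0 * x 1 - γ * x 1 ∧
      f β γ x 2 = γ * x 1)
    (T : ℝ) (hT : 0 < T) (n : ℕ) (tk : ℕ → ℝ)
    (ht0 : tk 0 = 0) (htmono : ∀ k < n, tk k < tk (k + 1)) (htn : tk n < T)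
    (g : ℝ → ℝ)
    (hg : ∀ s : ℝ, g s = s + ∑ k ∈ Finset.Icc 1 n,
      (if tk k < s then ((2 : ℝ) ^ k)⁻¹ else 0))
    (βc γc : ℕ → ℝ) (βs γs : ℝ → ℝ)
    (hβs0 : ∀ t ∈ Set.Icc (tk 0) (tk 1), βs t = βc 0)
    (hβsk : ∀ k : ℕ, 1 ≤ k → k < n → ∀ t ∈ Set.Ioc (tk k) (tk (k + 1)), βs t = βc k)
    (hβsn : ∀ t ∈ Set.Ioc (tk n) T, βs t = βc n)
    (hγs0 : ∀ t ∈ Set.Icc (tk 0) (tk 1), γs t = γc 0)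
    (hγsk : ∀ k : ℕ, 1 ≤ k → k < n → ∀ t ∈ Set.Ioc (tk k) (tk (k + 1)), γs t = γc k)
    (hγsn : ∀ t ∈ Set.Ioc (tk n) T, γs t = γc n)
    (X : ℕ → EuclideanSpace ℝ (Fin 3))
    (x : ℝ → EuclideanSpace ℝ (Fin 3))
    (hx0 : x 0 = X 0)
    (hode : ∀ᵐ t ∂(volume : Measure ℝ),
      (t ∈ Set.Icc 0 T ∧ ∀ k : ℕ, 1 ≤ k → k ≤ n → t ≠ tk k) →
        HasDerivAt x (f (βs t) (γs t) (x t)) t)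
    (himp : ∀ k : ℕ, 1 ≤ k → k ≤ n →
      Tendsto x (nhdsWithin (tk k) (Set.Ioi (tk k))) (nhds (X k))) :
    (∀ᵐ t ∂(volume : Measure ℝ),
      (t ∈ Set.Icc 0 T ∧ ∀ k : ℕ, 1 ≤ k → k ≤ n → t ≠ tk k) →
        Tendsto (fun s => (g s - g t)⁻¹ • (x s - x t))
          (nhdsWithin t {t}ᶜ) (nhds (f (βs t) (γs t) (x t)))) ∧
    (∀ k : ℕ, 1 ≤ k → k ≤ n →
      Tendsto (fun s => (g s - g (tk k))⁻¹ • (x s - x (tk k)))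
        (nhdsWithin (tk k) (Set.Ioi (tk k)))
        (nhds ((2 : ℝ) ^ k • (X k - x (tk k))))) := by
  -- strict monotonicity of `tk` up to `n`
  have hmono : ∀ k ≤ n, ∀ j < k, tk j < tk k := by
    intro k
    induction k with
    | zero => intro _ j hj; omega
    | succ m ih =>
      intro hk j hj
      have hm : tk m < tk (m + 1) := htmono m (by omega)
      rcases Nat.lt_or_ge j m with h | h
      · exact (ih (by omega) j h).trans hm
      · have hjm : j = m := by omega
        rw [hjm]; exact hm
  constructor
  · -- part (a)
    filter_upwards [hode] with t hd ht
    obtain ⟨htIcc, htne⟩ := ht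
    have hd' := hd ⟨htIcc, htne⟩
    rw [hasDerivAt_iff_tendsto_slope] at hd'
    refine hd'.congr' ?_
    have hev : ∀ᶠ s in nhds t, ∀ j ∈ Finset.Icc 1 n, ((tk j < s) ↔ (tk j < t)) := by
      rw [eventually_all_finset]
      intro j hj
      simp only [Finset.mem_Icc] at hj
      have hne := htne j hj.1 hj.2
      rcases lt_or_gt_of_ne (Ne.symm hne) with h | h
      · filter_upwards [eventually_gt_nhds h] with s hs
        exact iff_of_true hs h
      · filter_upwards [eventually_lt_nhds h] with s hs
        exact iff_of_false (not_lt.2 hs.le) (not_lt.2 h.le)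
    filter_upwards [hev.filter_mono nhdsWithin_le_nhds] with s hs
    have hgs : g s - g t = s - t := by
      rw [hg s, hg t]
      have hsum : (∑ j ∈ Finset.Icc 1 n, if tk j < s then ((2:ℝ)^j)⁻¹ else 0)
          = ∑ j ∈ Finset.Icc 1 n, if tk j < t then ((2:ℝ)^j)⁻¹ else 0 :=
        Finset.sum_congr rfl fun j hj => by simp only [hs j hj]
      rw [hsum]; ring
    rw [slope_def_module, hgs]
  · -- part (b)
    intro k hk1 hkn
    have hne2 : ((2:ℝ)^k)⁻¹ ≠ 0 := by positivity
    obtain ⟨u, hu1, hu2⟩ : ∃ u, tk k < u ∧ ∀ j, k < j → j ≤ n → u ≤ tk j := by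
      rcases lt_or_ge k n with h | h
      · refine ⟨tk (k+1), htmono k h, fun j hj hjn => ?_⟩
        rcases eq_or_lt_of_le (Nat.succ_le_of_lt hj) with he | hl
        · rw [← he]
        · exact (hmono j hjn (k+1) hl).le
      · have hk' : k = n := le_antisymm hkn h
        exact ⟨T, hk' ▸ htn, fun j hj hjn => absurd (lt_of_lt_of_le hj hjn) (by omega)⟩
    have hmem : Set.Ioo (tk k) u ∈ nhdsWithin (tk k) (Set.Ioi (tk k)) :=
      Ioo_mem_nhdsGT_of_mem ⟨le_refl _, hu1⟩
    have heq : ∀ᶠ s in nhdsWithin (tk k) (Set.Ioi (tk k)),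
        g s - g (tk k) = (s - tk k) + ((2:ℝ)^k)⁻¹ := by
      filter_upwards [hmem] with s hs
      rw [hg s, hg (tk k)]
      have h1 : ∀ j ∈ Finset.Icc 1 n, (if tk j < s then ((2:ℝ)^j)⁻¹ else 0)
          = (if tk j < tk k then ((2:ℝ)^j)⁻¹ else 0)
            + (if j = k then ((2:ℝ)^k)⁻¹ else 0) := by
        intro j hj
        simp only [Finset.mem_Icc] at hj
        rcases lt_trichotomy j k with h | h | h
        · have ha : tk j < tk k := hmono k hkn j h
          have hb : tk j < s := ha.trans hs.1
          simp [hb, ha, Nat.ne_of_lt h]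
        · subst h
          simp [hs.1, lt_irrefl (tk j)]
        · have ha : ¬ tk j < tk k := not_lt.2 (hmono j hj.2 k h).le
          have hb : ¬ tk j < s := not_lt.2 (hs.2.trans_le (hu2 j h hj.2)).le
          simp [ha, hb, Nat.ne_of_gt h]
      rw [Finset.sum_congr rfl h1, Finset.sum_add_distrib,
        Finset.sum_ite_eq' (Finset.Icc 1 n) k]
      simp only [Finset.mem_Icc, hk1, hkn, and_self, if_true]
      ring
    have hsc : Tendsto (fun s : ℝ => ((s - tk k) + ((2:ℝ)^k)⁻¹)⁻¹)
        (nhdsWithin (tk k) (Set.Ioi (tk k))) (nhds ((2:ℝ)^k)) := by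
      have h1 : Tendsto (fun s : ℝ => (s - tk k) + ((2:ℝ)^k)⁻¹)
          (nhds (tk k)) (nhds (((2:ℝ)^k)⁻¹)) := by
        have h0 : Tendsto (fun s : ℝ => (s - tk k) + ((2:ℝ)^k)⁻¹)
            (nhds (tk k)) (nhds ((tk k - tk k) + ((2:ℝ)^k)⁻¹)) :=
          (tendsto_id.sub tendsto_const_nhds).add tendsto_const_nhds
        simpa using h0
      have h2 : Tendsto (fun s : ℝ => ((s - tk k) + ((2:ℝ)^k)⁻¹)⁻¹)
          (nhdsWithin (tk k) (Set.Ioi (tk k))) (nhds ((((2:ℝ)^k)⁻¹)⁻¹)) :=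
        (h1.mono_left (nhdsWithin_le_nhds (s := Set.Ioi (tk k)))).inv₀ hne2
      simpa using h2
    have hvec : Tendsto (fun s => x s - x (tk k))
        (nhdsWithin (tk k) (Set.Ioi (tk k))) (nhds (X k - x (tk k))) :=
      (himp k hk1 hkn).sub tendsto_const_nhds
    refine Tendsto.congr' ?_ (hsc.smul hvec)
    filter_upwards [heq] with s hs
    rw [hs]
end

section
/- (Stieltjes formulation implies impulsive formulation) Let x : ℝ → ℝ³ satisfy x(0) = x⁰ and: (a) for Lebesgue-almost every t ∈ [0,T] \ {t¹,…,tⁿ}, the quotient (g_s(s) − g_s(t))⁻¹ · (x(s) − x(t)) tends to f_{β_s(t),γ_s(t)}(x(t)) in ℝ³ as s → t with s ≠ t; and (b) for each k ∈ {1,…,n}, the quotient (g_s(s) − g_s(tᵏ))⁻¹ · (x(s) − x(tᵏ)) tends to 2ᵏ · (xᵏ − x(tᵏ)) as s → tᵏ from the right, and the right-hand limit of x at tᵏ exists. Then: (i) for Lebesgue-almost every t ∈ [0,T] \ {t¹,…,tⁿ}, x is differentiable at t with x'(t) = f_{β_s(t),γ_s(t)}(x(t)); and (ii) for each k ∈ {1,…,n},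 lim_{s→tᵏ⁺} x(s) = xᵏ. -/
open Filter Set MeasureTheory

/-- (Stieltjes formulation implies impulsive formulation.)  If `x`
starts at `x⁰` and satisfies the Stieltjes `g_s`-derivative equation
`x'_{g_s}(t) = F_s(t, x(t))`, namely (a) for Lebesgue-a.e. `t ∈ [0,T] \ {t¹,…,tⁿ}`
the Stieltjes difference quotient tends to `f_{β_s(t),γ_s(t)}(x(t))` and (b) at
each impulse time `tᵏ` the right-sided Stieltjes difference quotient tends to
`2ᵏ · (xᵏ − x(tᵏ))` and the right-hand limit of `x` at `tᵏ` exists, then `x`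
solves the impulsive system: it satisfies the ordinary SIR equation at
Lebesgue-a.e. `t ∈ [0,T] \ {t¹,…,tⁿ}` and its right-hand limit at each `tᵏ`
equals `xᵏ`. -/
theorem stieltjes_implies_impulsive
    (f : ℝ → ℝ → EuclideanSpace ℝ (Fin 3) → EuclideanSpace ℝ (Fin 3))
    (hf : ∀ (β γ : ℝ) (x : EuclideanSpace ℝ (Fin 3)),
      f β γ x 0 = -β * x 0 * x 1 ∧
      f β γ x 1 = β * x 0 * x 1 - γ * x 1 ∧
      f β γ x 2 = γ * x 1)
    (T : ℝ) (hT : 0 < T) (n : ℕ) (tk : ℕ → ℝ)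
    (ht0 : tk 0 = 0) (htmono : ∀ k < n, tk k < tk (k + 1)) (htn : tk n < T)
    (g : ℝ → ℝ)
    (hg : ∀ s : ℝ, g s = s + ∑ k ∈ Finset.Icc 1 n,
      (if tk k < s then ((2 : ℝ) ^ k)⁻¹ else 0))
    (βc γc : ℕ → ℝ) (βs γs : ℝ → ℝ)
    (hβs0 : ∀ t ∈ Set.Icc (tk 0) (tk 1), βs t = βc 0)
    (hβsk : ∀ k : ℕ, 1 ≤ k → k < n → ∀ t ∈ Set.Ioc (tk k) (tk (k + 1)), βs t = βc k)
    (hβsn : ∀ t ∈ Set.Ioc (tk n) T, βs t = βc n)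
    (hγs0 : ∀ t ∈ Set.Icc (tk 0) (tk 1), γs t = γc 0)
    (hγsk : ∀ k : ℕ, 1 ≤ k → k < n → ∀ t ∈ Set.Ioc (tk k) (tk (k + 1)), γs t = γc k)
    (hγsn : ∀ t ∈ Set.Ioc (tk n) T, γs t = γc n)
    (X : ℕ → EuclideanSpace ℝ (Fin 3))
    (x : ℝ → EuclideanSpace ℝ (Fin 3))
    (hx0 : x 0 = X 0)
    (ha : ∀ᵐ t ∂(volume : Measure ℝ),
      (t ∈ Set.Icc 0 T ∧ ∀ k : ℕ, 1 ≤ k → k ≤ n → t ≠ tk k) →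
        Tendsto (fun s => (g s - g t)⁻¹ • (x s - x t))
          (nhdsWithin t {t}ᶜ) (nhds (f (βs t) (γs t) (x t))))
    (hb : ∀ k : ℕ, 1 ≤ k → k ≤ n →
      Tendsto (fun s => (g s - g (tk k))⁻¹ • (x s - x (tk k)))
        (nhdsWithin (tk k) (Set.Ioi (tk k)))
        (nhds ((2 : ℝ) ^ k • (X k - x (tk k)))))
    (hlim : ∀ k : ℕ, 1 ≤ k → k ≤ n →
      ∃ L : EuclideanSpace ℝ (Fin 3),
        Tendsto x (nhdsWithin (tk k) (Set.Ioi (tk k))) (nhds L)) :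
    (∀ᵐ t ∂(volume : Measure ℝ),
      (t ∈ Set.Icc 0 T ∧ ∀ k : ℕ, 1 ≤ k → k ≤ n → t ≠ tk k) →
        HasDerivAt x (f (βs t) (γs t) (x t)) t) ∧
    (∀ k : ℕ, 1 ≤ k → k ≤ n →
      Tendsto x (nhdsWithin (tk k) (Set.Ioi (tk k))) (nhds (X k))) := by
  have hmono : ∀ i j : ℕ, i < j → j ≤ n → tk i < tk j := by
    intro i j hij hjn
    induction j with
    | zero => omega
    | succ m ih =>
      rcases Nat.lt_succ_iff_lt_or_eq.mp hij with h | h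
      · exact lt_trans (ih h (by omega)) (htmono m (by omega))
      · subst h; exact htmono i (by omega)
  constructor
  · filter_upwards [ha] with t hat ht
    have htend := hat ht
    obtain ⟨htI, htne⟩ := ht
    have hev : ∀ᶠ s in nhds t, g s - g t = s - t := by
      have hall : ∀ᶠ s in nhds t, ∀ k ∈ Finset.Icc 1 n,
          (if tk k < s then ((2:ℝ)^k)⁻¹ else 0) = (if tk k < t then ((2:ℝ)^k)⁻¹ else 0) := by
        rw [eventually_all_finset]
        intro k hk
        simp only [Finset.mem_Icc] at hk
        rcases lt_or_gt_of_ne (Ne.symm (htne k hk.1 hk.2)) with h | h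
        · filter_upwards [eventually_gt_nhds h] with s hs
          rw [if_pos hs, if_pos h]
        · filter_upwards [eventually_lt_nhds h] with s hs
          rw [if_neg (not_lt.mpr hs.le), if_neg (not_lt.mpr h.le)]
      filter_upwards [hall] with s hs
      rw [hg s, hg t, Finset.sum_congr rfl hs]
      ring
    rw [hasDerivAt_iff_tendsto_slope]
    apply htend.congr'
    filter_upwards [hev.filter_mono nhdsWithin_le_nhds] with s hs
    rw [slope_def_module, hs]
  · intro k hk1 hkn
    have hbk := hb k hk1 hkn
    set u : ℝ := if k = n then T else tk (k+1) with hu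
    have hku : tk k < u := by
      rcases eq_or_ne k n with h | h
      · simp [hu, h, htn]
      · simp only [hu, if_neg h]
        exact htmono k (lt_of_le_of_ne hkn h)
    have hev : ∀ᶠ s in nhdsWithin (tk k) (Set.Ioi (tk k)),
        g s - g (tk k) = s - tk k + ((2:ℝ)^k)⁻¹ := by
      filter_upwards [Ioo_mem_nhdsGT hku] with s hs
      rw [hg s, hg (tk k)]
      have hsum : ∑ j ∈ Finset.Icc 1 n, ((if tk j < s then ((2:ℝ)^j)⁻¹ else 0)
          - (if tk j < tk k then ((2:ℝ)^j)⁻¹ else 0)) = ((2:ℝ)^k)⁻¹ := by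
        rw [Finset.sum_eq_single k]
        · rw [if_pos hs.1, if_neg (lt_irrefl _), sub_zero]
        · intro j hj hjk
          simp only [Finset.mem_Icc] at hj
          rcases lt_or_gt_of_ne hjk with h | h
          · have h1 : tk j < tk k := hmono j k h hkn
            rw [if_pos (h1.trans hs.1), if_pos h1, sub_self]
          · have hkln : k < n := lt_of_lt_of_le h hj.2
            have h2 : u ≤ tk j := by
              rw [hu, if_neg (Nat.ne_of_lt hkln)]
              rcases eq_or_lt_of_le (Nat.succ_le_of_lt h) with h' | h'
              · exact le_of_eq (congrArg tk h')
              · exact le_of_lt (hmono _ _ h' hj.2)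
            have h3 : ¬ tk j < s := not_lt.mpr (hs.2.le.trans h2)
            have h4 : ¬ tk j < tk k := not_lt.mpr (hmono k j h hj.2).le
            rw [if_neg h3, if_neg h4, sub_self]
        · intro hk
          exact absurd (Finset.mem_Icc.mpr ⟨hk1, hkn⟩) hk
      have := hsum
      rw [Finset.sum_sub_distrib] at this
      linarith [this]
    have hpos : ∀ᶠ s in nhdsWithin (tk k) (Set.Ioi (tk k)), g s - g (tk k) ≠ 0 := by
      filter_upwards [hev, self_mem_nhdsWithin] with s hs hs'
      rw [hs]
      have : (0:ℝ) < s - tk k := sub_pos.mpr hs'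
      positivity
    have h1 : Tendsto (fun s => g s - g (tk k)) (nhdsWithin (tk k) (Set.Ioi (tk k)))
        (nhds (((2:ℝ)^k)⁻¹)) := by
      have hc : Tendsto (fun s : ℝ => s - tk k + ((2:ℝ)^k)⁻¹) (nhdsWithin (tk k) (Set.Ioi (tk k)))
          (nhds (((2:ℝ)^k)⁻¹)) := by
        have : Tendsto (fun s : ℝ => s - tk k + ((2:ℝ)^k)⁻¹) (nhds (tk k))
            (nhds (tk k - tk k + ((2:ℝ)^k)⁻¹)) := by
          exact ((continuous_id.sub continuous_const).add continuous_const).tendsto _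
        simpa using this.mono_left nhdsWithin_le_nhds
      exact hc.congr' (hev.mono fun s hs => hs.symm)
    have h2 : Tendsto (fun s => (g s - g (tk k)) • ((g s - g (tk k))⁻¹ • (x s - x (tk k))))
        (nhdsWithin (tk k) (Set.Ioi (tk k)))
        (nhds (((2:ℝ)^k)⁻¹ • ((2:ℝ)^k • (X k - x (tk k))))) := h1.smul hbk
    have h3 : Tendsto (fun s => x s - x (tk k)) (nhdsWithin (tk k) (Set.Ioi (tk k)))
        (nhds (X k - x (tk k))) := by
      have heq : (((2:ℝ)^k)⁻¹ • ((2:ℝ)^k • (X k - x (tk k)))) = X k - x (tk k) := by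
        rw [smul_smul, inv_mul_cancel₀ (by positivity), one_smul]
      rw [← heq]
      apply h2.congr'
      filter_upwards [hpos] with s hs
      rw [smul_inv_smul₀ hs]
    have := h3.add_const (x (tk k))
    simpa using this
end
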